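/- In the free group π on α_1,…,α_g,β_1,…,β_g,γ_1,…,γ_n with g ≥ 1, the automorphisms a_1 (β_1 ↦ β_1α_1, fixing all other generators) and b (α_1 ↦ α_1β_1^{-1}, fixing all other generators) satisfy the braid relation a_1 ∘ b ∘ a_1 = b ∘ a_1 ∘ b as elements of Out(π), i.e. the two composites differ by an inner automorphism of π. -/

import Mathlib

/-- Generators of the fundamental group of a genus-`g` surface with `n` punctures:
`α_1,…,α_g` (inl), `β_1,…,β_g` (inr inl), `γ_1,…,γ_n` (inr inr), 0-indexed. -/
abbrev SurfGen (g n : ℕ) := Fin g ⊕ (Fin g ⊕ Fin n)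

/-- The ambient free group on the `2g + n` generators. -/
abbrev SG (g n : ℕ) := FreeGroup (SurfGen g n)

/-- The generator `α_{k+1}`. -/
def A (g n : ℕ) (k : Fin g) : SG g n := FreeGroup.of (Sum.inl k)

/-- The generator `β_{k+1}`. -/
def B (g n : ℕ) (k : Fin g) : SG g n := FreeGroup.of (Sum.inr (Sum.inl k))

/-- The generator `γ_{k+1}`. -/
def C (g n : ℕ) (k : Fin n) : SG g n := FreeGroup.of (Sum.inr (Sum.inr k))

open scoped commutatorElement

/-- The surface relator `R = [α_1,β_1]⋯[α_g,β_g]·γ_1⋯γ_n`. -/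
def SRel (g n : ℕ) : SG g n :=
  (List.ofFn (fun k : Fin g => ⁅A g n k, B g n k⁆)).prod * (List.ofFn (C g n)).prod
/-- The endomorphism `b`: `α_1 ↦ α_1 β_1⁻¹`, fixing all other generators. -/
def bMap (g n : ℕ) : Monoid.End (SG g n) :=
  FreeGroup.lift fun j =>
    match j with
    | Sum.inl k => if (k : ℕ) = 0 then A g n k * (B g n k)⁻¹ else FreeGroup.of (Sum.inl k)
    | Sum.inr x => FreeGroup.of (Sum.inr x)
/-- The endomorphism `a_1`: `β_1 ↦ β_1 α_1`, fixing all other generators. -/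
def a1Map (g n : ℕ) : Monoid.End (SG g n) :=
  FreeGroup.lift fun j =>
    match j with
    | Sum.inr (Sum.inl k) =>
        if (k : ℕ) = 0 then B g n k * A g n k else FreeGroup.of (Sum.inr (Sum.inl k))
    | Sum.inl k => FreeGroup.of (Sum.inl k)
    | Sum.inr (Sum.inr k) => FreeGroup.of (Sum.inr (Sum.inr k))

/-- the automorphisms `a_1` and `b` satisfy the braid relation
`a_1 ∘ b ∘ a_1 = b ∘ a_1 ∘ b` in `Out(π)`, i.e. the two composites differ by an inner
automorphism of `π`. -/
theorem stmt_17 (g n : ℕ) (hg : 0 < g) :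
    ∃ u : SG g n, ∀ w : SG g n,
      (a1Map g n) ((bMap g n) ((a1Map g n) w)) =
        u * ((bMap g n) ((a1Map g n) ((bMap g n) w))) * u⁻¹ := by
  have h : ((a1Map g n : SG g n →* SG g n).comp ((bMap g n : SG g n →* SG g n).comp
      (a1Map g n : SG g n →* SG g n))) =
      ((bMap g n : SG g n →* SG g n).comp ((a1Map g n : SG g n →* SG g n).comp
      (bMap g n : SG g n →* SG g n))) := by
    apply FreeGroup.ext_hom
    rintro (k | (k | k)) <;>
      by_cases hk : (k : ℕ) = 0 <;>
      simp [a1Map, bMap, A, B, MonoidHom.comp_apply, hk, mul_assoc]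
  exact ⟨1, fun w => by
    have := DFunLike.congr_fun h w
    simp only [one_mul, inv_one, mul_one]
    exact this⟩
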